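/- arXiv:2011.09498 — 3 statements merged into one kernel-verified Lean document; each statement's English description precedes it below -/
import Mathlib

section
/- Let H, F, E be Hilbert spaces, A ∈ L(H,F), T ∈ L(H,E), b ∈ F, W ∈ L(F)⁺ with W^{1/2} ∈ S₂. If the operator T*T + A*WA is not bounded below, then either there exists x ∈ ker(T) with W^{1/2}Ax = W^{1/2}b (the trivial case), or the regularized weighted total least squares problem min over (X,x) of ‖Tx‖² + ‖A−X‖²_{2,W} + ‖Xx−b‖²_W has no solution (the infimum is not attained). -/
/-!
Suppose the infimum is attained at `(X₀, x₀)`. Since `T*T + A*WA` is not bounded below, for every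
`ε > 0` there is a unit vector `u` with `‖T u‖, ‖W^{1/2} A u‖ ≤ ε²`; the rank-one update of `A`
sending `u / ε` to `b` then has objective value at most `ε² (1 + (‖W^{1/2} b‖ + ε)²)`, so the
minimum is `0`. Hence `T x₀ = 0`, `W^{1/2} X₀ x₀ = W^{1/2} b`, and `W^{1/2} (A - X₀)` is a
Hilbert–Schmidt operator of norm `0`, so `W^{1/2} A x₀ = W^{1/2} b`.
-/

open ContinuousLinearMap Filter Topology
open scoped RealInnerProductSpace

namespace HilbertBasis

variable {ι ι' H G : Type*} [NormedAddCommGroup H] [InnerProductSpace ℝ H]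
  [NormedAddCommGroup G] [InnerProductSpace ℝ G]

theorem hasSum_inner_sq (e : HilbertBasis ι ℝ H) (x : H) :
    HasSum (fun i => ⟪e i, x⟫ ^ 2) (‖x‖ ^ 2) := by
  simpa only [real_inner_self_eq_norm_sq, sq, real_inner_comm x] using e.hasSum_inner_mul_inner x x

theorem eq_zero_of_tsum_norm_sq_apply_eq_zero (e : HilbertBasis ι ℝ H) {C : H →L[ℝ] G}
    (hC : Summable fun i => ‖C (e i)‖ ^ 2) (h : ∑' i, ‖C (e i)‖ ^ 2 = 0) : C = 0 := by
  have hCe := (hasSum_zero_iff_of_nonneg fun _ => sq_nonneg _).1 (h ▸ hC.hasSum)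
  refine ext_on (Submodule.dense_iff_topologicalClosure_eq_top.2 e.dense_span) ?_
  rintro _ ⟨i, rfl⟩
  simpa using congrFun hCe i

variable [CompleteSpace H] [CompleteSpace G]

theorem summable_norm_sq_apply_of_summable_adjoint (e : HilbertBasis ι ℝ H)
    (f : HilbertBasis ι' ℝ G) (C : H →L[ℝ] G)
    (hC : Summable fun j => ‖adjoint C (f j)‖ ^ 2) :
    Summable fun i => ‖C (e i)‖ ^ 2 := by
  -- Tonelli: summing `⟪C (e i), f j⟫²` over `i` first gives `‖C† (f j)‖²`, over `j` first `‖C (e i)‖²`.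
  let g : ι' × ι → ℝ := fun p => ⟪e p.2, adjoint C (f p.1)⟫ ^ 2
  have hg0 : 0 ≤ g := fun _ => sq_nonneg _
  have hg : Summable g := by
    have hrow : ∀ j, HasSum (fun i => g (j, i)) (‖adjoint C (f j)‖ ^ 2) := fun j =>
      e.hasSum_inner_sq (adjoint C (f j))
    refine (summable_prod_of_nonneg hg0).2 ⟨fun j => (hrow j).summable, ?_⟩
    simpa only [(hrow _).tsum_eq] using hC
  have hfiber : ∀ i, HasSum (fun j => g (j, i)) (‖C (e i)‖ ^ 2) := fun i => by
    simpa only [g, adjoint_inner_right, real_inner_comm (f _)] using f.hasSum_inner_sq (C (e i))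
  have := ((summable_prod_of_nonneg fun p => hg0 p.swap).1 hg.prod_symm).2
  simpa only [Prod.swap_prod_mk, (hfiber _).tsum_eq] using this

theorem summable_norm_sq_comp_apply (e : HilbertBasis ι ℝ H) (f : HilbertBasis ι' ℝ G)
    {R : G →L[ℝ] G} (hR : IsSelfAdjoint R) (hRf : Summable fun j => ‖R (f j)‖ ^ 2)
    (B : H →L[ℝ] G) : Summable fun i => ‖(R.comp B) (e i)‖ ^ 2 := by
  refine e.summable_norm_sq_apply_of_summable_adjoint f _ ?_
  refine (hRf.mul_left (‖adjoint B‖ ^ 2)).of_nonneg_of_le (fun _ => sq_nonneg _) fun j => ?_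
  rw [adjoint_comp, hR.adjoint_eq, comp_apply, ← mul_pow]
  gcongr
  exact le_opNorm _ _

end HilbertBasis

theorem ContinuousLinearMap.exists_norm_eq_one_norm_apply_lt {V V' : Type*}
    [NormedAddCommGroup V] [NormedSpace ℝ V] [SeminormedAddCommGroup V'] [NormedSpace ℝ V']
    (S : V →L[ℝ] V') (hS : ¬ ∃ c : ℝ, 0 < c ∧ ∀ x, c * ‖x‖ ≤ ‖S x‖) {δ : ℝ} (hδ : 0 < δ) :
    ∃ u, ‖u‖ = 1 ∧ ‖S u‖ < δ := by
  push Not at hS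
  obtain ⟨x, hx⟩ := hS δ hδ
  have hx0 : x ≠ 0 := fun h => by simp [h] at hx
  refine ⟨‖x‖⁻¹ • x, norm_smul_inv_norm hx0, ?_⟩
  rw [map_smul, norm_smul, norm_inv, norm_norm, inv_mul_lt_iff₀ (norm_pos_iff.2 hx0), mul_comm]
  exact hx

section RWTLS

variable {ι H F E : Type*} [NormedAddCommGroup H] [InnerProductSpace ℝ H]
  [NormedAddCommGroup F] [InnerProductSpace ℝ F] [NormedAddCommGroup E] [InnerProductSpace ℝ E]
  (T : H →L[ℝ] E) (A : H →L[ℝ] F) (R : F →L[ℝ] F) (b : F) (e : HilbertBasis ι ℝ H)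

/-- The regularized weighted total least squares objective
`‖T x‖² + ‖A - X‖²_{2,W} + ‖X x - b‖²_W`, written with `R = W^{1/2}`. -/
noncomputable def rwtlsObjective (X : H →L[ℝ] F) (x : H) : ℝ :=
  ‖T x‖ ^ 2 + (∑' i, ‖(R.comp (A - X)) (e i)‖ ^ 2) + ‖R (X x - b)‖ ^ 2

variable {T A R b e}

theorem rwtlsObjective_add_innerSL_smulRight {x y : H} (hxy : ⟪y, x⟫ = 1) :
    rwtlsObjective T A R b e (A + (innerSL ℝ y).smulRight (b - A x)) x =
      ‖T x‖ ^ 2 + ‖y‖ ^ 2 * ‖R (b - A x)‖ ^ 2 := by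
  have hXx : (A + (innerSL ℝ y).smulRight (b - A x)) x = b := by simp [hxy]
  have hHS : HasSum (fun i => ‖(R.comp (A - (A + (innerSL ℝ y).smulRight (b - A x)))) (e i)‖ ^ 2)
      (‖y‖ ^ 2 * ‖R (b - A x)‖ ^ 2) := by
    refine ((e.hasSum_inner_sq y).mul_right _).congr_fun fun i => ?_
    simp [norm_smul, mul_pow, real_inner_comm]
  rw [rwtlsObjective, hXx, hHS.tsum_eq, sub_self, map_zero, norm_zero]
  ring

theorem exists_rwtlsObjective_le_of_norm_le {u : H} (hu : ‖u‖ = 1) {ε : ℝ} (hε : 0 < ε)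
    (hTu : ‖T u‖ ≤ ε ^ 2) (hRAu : ‖R (A u)‖ ≤ ε ^ 2) :
    ∃ X x, rwtlsObjective T A R b e X x ≤ ε ^ 2 * (1 + (‖R b‖ + ε) ^ 2) := by
  have hinner : ⟪ε • u, ε⁻¹ • u⟫ = 1 := by
    rw [real_inner_smul_left, real_inner_smul_right, real_inner_self_eq_norm_sq, hu]
    field_simp
  have hscale : ε⁻¹ * ε ^ 2 = ε := by field_simp
  have hTx : ‖T (ε⁻¹ • u)‖ ≤ ε := by
    rw [map_smul, norm_smul, norm_inv, Real.norm_of_nonneg hε.le]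
    exact (mul_le_mul_of_nonneg_left hTu (inv_nonneg.2 hε.le)).trans_eq hscale
  have hRx : ‖R (b - A (ε⁻¹ • u))‖ ≤ ‖R b‖ + ε := by
    rw [map_smul, map_sub, map_smul]
    refine (norm_sub_le _ _).trans ?_
    gcongr
    rw [norm_smul, norm_inv, Real.norm_of_nonneg hε.le]
    exact (mul_le_mul_of_nonneg_left hRAu (inv_nonneg.2 hε.le)).trans_eq hscale
  refine ⟨_, _, (rwtlsObjective_add_innerSL_smulRight hinner).trans_le ?_⟩
  rw [norm_smul, hu, Real.norm_of_nonneg hε.le, mul_one, mul_add, mul_one]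
  gcongr

theorem apply_eq_zero_and_eq_of_rwtlsObjective_nonpos {X : H →L[ℝ] F} {x : H}
    (hX : Summable fun i => ‖(R.comp (A - X)) (e i)‖ ^ 2)
    (h : rwtlsObjective T A R b e X x ≤ 0) : T x = 0 ∧ R (A x) = R b := by
  have hT := sq_nonneg ‖T x‖
  have hHS : 0 ≤ ∑' i, ‖(R.comp (A - X)) (e i)‖ ^ 2 := tsum_nonneg fun _ => sq_nonneg _
  have hb := sq_nonneg ‖R (X x - b)‖
  rw [rwtlsObjective] at h
  have hAX : R.comp (A - X) = 0 := e.eq_zero_of_tsum_norm_sq_apply_eq_zero hX (by linarith)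
  refine ⟨by simpa using (by linarith : ‖T x‖ ^ 2 = 0), ?_⟩
  calc R (A x) = R (X x) := by simpa [sub_eq_zero] using DFunLike.congr_fun hAX x
    _ = R b := by simpa [sub_eq_zero] using (by linarith : ‖R (X x - b)‖ ^ 2 = 0)

variable [CompleteSpace H] [CompleteSpace F] [CompleteSpace E]

theorem inner_adjoint_comp_add_adjoint_comp_apply_self (hR : IsSelfAdjoint R) (x : H) :
    ⟪((adjoint T).comp T + (adjoint A).comp ((R.comp R).comp A)) x, x⟫ =
      ‖T x‖ ^ 2 + ‖R (A x)‖ ^ 2 := by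
  simp only [add_apply, comp_apply, inner_add_left, adjoint_inner_left]
  nth_rw 1 [← hR.adjoint_eq]
  rw [adjoint_inner_left, real_inner_self_eq_norm_sq, real_inner_self_eq_norm_sq]

theorem exists_rwtlsObjective_le (hR : IsSelfAdjoint R)
    (hS : ¬ ∃ c : ℝ, 0 < c ∧ ∀ x : H,
      c * ‖x‖ ≤ ‖((adjoint T).comp T + (adjoint A).comp ((R.comp R).comp A)) x‖)
    {ε : ℝ} (hε : 0 < ε) :
    ∃ X x, rwtlsObjective T A R b e X x ≤ ε ^ 2 * (1 + (‖R b‖ + ε) ^ 2) := by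
  obtain ⟨u, hu, hSu⟩ := exists_norm_eq_one_norm_apply_lt _ hS (pow_pos hε 4)
  have hsum : ‖T u‖ ^ 2 + ‖R (A u)‖ ^ 2 < (ε ^ 2) ^ 2 := by
    rw [← inner_adjoint_comp_add_adjoint_comp_apply_self hR, ← pow_mul]
    exact (real_inner_le_norm _ _).trans_lt (by rwa [hu, mul_one])
  have hsq : ∀ r : ℝ, 0 ≤ r → r ^ 2 ≤ (ε ^ 2) ^ 2 → r ≤ ε ^ 2 := fun r hr h =>
    (pow_le_pow_iff_left₀ hr (by positivity) two_ne_zero).1 h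
  exact exists_rwtlsObjective_le_of_norm_le hu hε
    (hsq _ (norm_nonneg _) (by nlinarith [sq_nonneg ‖R (A u)‖]))
    (hsq _ (norm_nonneg _) (by nlinarith [sq_nonneg ‖T u‖]))

end RWTLS

/-- Hilbert spaces `H, F, E`, `A ∈ L(H,F)`, `T ∈ L(H,E)`, `b ∈ F`, `W ∈ L(F)`
positive with square root `R = W^{1/2}` Hilbert–Schmidt.  If `T*T + A*WA` is not bounded
below, then either there exists `x ∈ ker T` with `W^{1/2}Ax = W^{1/2}b` (trivial case), or
the regularized weighted total least squares problem has no solution (no minimizer). -/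
theorem stmt5_RWTLS_no_solution
    {H F E ι ι' : Type*} [NormedAddCommGroup H] [InnerProductSpace ℝ H] [CompleteSpace H]
    [NormedAddCommGroup F] [InnerProductSpace ℝ F] [CompleteSpace F]
    [NormedAddCommGroup E] [InnerProductSpace ℝ E] [CompleteSpace E]
    (A : H →L[ℝ] F) (T : H →L[ℝ] E) (b : F) (W R : F →L[ℝ] F)
    (hR : R.IsPositive) (hRW : R.comp R = W)
    (f : HilbertBasis ι' ℝ F) (hHS : Summable fun i => ‖R (f i)‖ ^ 2)
    (e : HilbertBasis ι ℝ H)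
    (hnb : ¬ ∃ c : ℝ, 0 < c ∧ ∀ x : H,
        c * ‖x‖ ≤ ‖((adjoint T).comp T + (adjoint A).comp (W.comp A)) x‖) :
    (∃ x : H, T x = 0 ∧ R (A x) = R b) ∨
    ¬ ∃ (X₀ : H →L[ℝ] F) (x₀ : H), ∀ (X : H →L[ℝ] F) (x : H),
        ‖T x₀‖ ^ 2 + (∑' i, ‖(R.comp (A - X₀)) (e i)‖ ^ 2) + ‖R (X₀ x₀ - b)‖ ^ 2 ≤
          ‖T x‖ ^ 2 + (∑' i, ‖(R.comp (A - X)) (e i)‖ ^ 2) + ‖R (X x - b)‖ ^ 2 := by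
  refine or_iff_not_imp_right.2 fun hmin => ?_
  obtain ⟨X₀, x₀, hX₀⟩ := not_not.1 hmin
  subst hRW
  have hlim : Tendsto (fun ε : ℝ => ε ^ 2 * (1 + (‖R b‖ + ε) ^ 2)) (𝓝[>] 0) (𝓝 0) :=
    ((by fun_prop : Continuous fun ε : ℝ => ε ^ 2 * (1 + (‖R b‖ + ε) ^ 2)).tendsto' 0 0
      (by simp)).mono_left nhdsWithin_le_nhds
  have hle : rwtlsObjective T A R b e X₀ x₀ ≤ 0 :=
    ge_of_tendsto hlim <| eventually_nhdsWithin_of_forall fun ε hε => by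
      obtain ⟨X, x, hX⟩ := exists_rwtlsObjective_le (b := b) (e := e) hR.isSelfAdjoint hnb hε
      exact (hX₀ X x).trans hX
  exact ⟨x₀, apply_eq_zero_and_eq_of_rwtlsObjective_nonpos
    (e.summable_norm_sq_comp_apply f hR.isSelfAdjoint hHS _) hle⟩
end

section
/- Let H, F, E be Hilbert spaces, A ∈ L(H,F), T ∈ L(H,E), b ∈ F, W ∈ L(F)⁺ with W^{1/2} ∈ S₂. If (A₀, x₀) minimizes the regularized weighted total least squares objective, then (1+‖x₀‖²)·T*Tx₀ + A*W(Ax₀ − b) = (‖Ax₀−b‖²_W / (1+‖x₀‖²))·x₀, and moreover WA₀ = WA − ⟨·, x₀⟩ W(Ax₀−b)/(1+‖x₀‖²). -/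
open ContinuousLinearMap InnerProductSpace

/-! Perturbing the minimizer `(A₀, x₀)` along `x₀ + t • y`, and along the rank-one directions
`A₀ + t • rankOne ℝ u v`, gives quadratics in `t` that are minimal at `t = 0`, so their linear
coefficients vanish. The first yields the normal equation `T†T x₀ + A₀† W (A₀ x₀ - b) = 0`, the
second the identity `W (A - A₀) = ⟪x₀, ·⟫ • W (A₀ x₀ - b)`. Evaluating the latter at `x₀` gives
`W (A x₀ - b) = (1 + ‖x₀‖²) • W (A₀ x₀ - b)`, and eliminating `A₀` yields both claims.
Because `R = W^{1/2}` is Hilbert–Schmidt, so is every `R (A - X)`, and the Frobenius sums are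
genuine sums rather than the junk value `0` of a non-summable `tsum`. -/

lemma eq_zero_of_forall_nonneg_mul_add_mul_sq {c a : ℝ}
    (h : ∀ t : ℝ, 0 ≤ c * t + a * t ^ 2) : c = 0 := by
  have hd : discrim a c 0 ≤ 0 := discrim_le_zero fun t => by linarith [h t, sq t]
  exact pow_eq_zero_iff two_ne_zero |>.mp <| le_antisymm (by simpa [discrim] using hd) (sq_nonneg c)

lemma norm_add_smul_sq_real {F : Type*} [NormedAddCommGroup F] [InnerProductSpace ℝ F]
    (x y : F) (t : ℝ) : ‖x + t • y‖ ^ 2 = ‖x‖ ^ 2 + 2 * inner ℝ x y * t + ‖y‖ ^ 2 * t ^ 2 := by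
  rw [norm_add_sq_real, real_inner_smul_right, norm_smul, mul_pow, Real.norm_eq_abs, sq_abs]
  ring

lemma HilbertBasis.hasSum_inner_sq_s9 {ι E : Type*} [NormedAddCommGroup E] [InnerProductSpace ℝ E]
    (b : HilbertBasis ι ℝ E) (x : E) : HasSum (fun i => inner ℝ x (b i) ^ 2) (‖x‖ ^ 2) := by
  rw [← real_inner_self_eq_norm_sq]
  simpa only [sq, real_inner_comm x] using b.hasSum_inner_mul_inner x x

section

variable {H G K ι κ : Type*}
  [NormedAddCommGroup H] [InnerProductSpace ℝ H] [CompleteSpace H]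
  [NormedAddCommGroup G] [InnerProductSpace ℝ G] [CompleteSpace G]
  [NormedAddCommGroup K] [InnerProductSpace ℝ K] [CompleteSpace K]

lemma HilbertBasis.summable_norm_sq_apply_of_summable_adjoint_s9 (e : HilbertBasis ι ℝ H)
    (f : HilbertBasis κ ℝ G) {S : H →L[ℝ] G} (hS : Summable fun j => ‖adjoint S (f j)‖ ^ 2) :
    Summable fun i => ‖S (e i)‖ ^ 2 := by
  have hswap : ∀ j i, inner ℝ (adjoint S (f j)) (e i) ^ 2 = inner ℝ (S (e i)) (f j) ^ 2 := by
    intro j i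
    rw [adjoint_inner_left, real_inner_comm]
  have hc : Summable fun p : κ × ι => inner ℝ (S (e p.2)) (f p.1) ^ 2 := by
    refine (summable_prod_of_nonneg fun _ => sq_nonneg _).mpr ⟨fun j => ?_, ?_⟩
    · exact ((e.hasSum_inner_sq_s9 _).congr_fun fun i => (hswap j i).symm).summable
    · refine hS.congr fun j => ?_
      exact (((e.hasSum_inner_sq_s9 _).congr_fun fun i => (hswap j i).symm).tsum_eq).symm
  refine ((summable_prod_of_nonneg fun _ => sq_nonneg _).mp hc.prod_symm).2.congr fun i => ?_
  exact (f.hasSum_inner_sq_s9 (S (e i))).tsum_eq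

lemma HilbertBasis.summable_norm_sq_comp_apply_s9 (e : HilbertBasis ι ℝ H) (f : HilbertBasis κ ℝ K)
    {R : G →L[ℝ] K} (hR : Summable fun j => ‖adjoint R (f j)‖ ^ 2) (B : H →L[ℝ] G) :
    Summable fun i => ‖(R ∘L B) (e i)‖ ^ 2 := by
  refine e.summable_norm_sq_apply_of_summable_adjoint_s9 f <|
    (hR.mul_left (‖adjoint B‖ ^ 2)).of_nonneg_of_le (fun _ => sq_nonneg _) fun j => ?_
  rw [adjoint_comp, comp_apply, ← mul_pow]
  gcongr
  exact le_opNorm _ _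

lemma HilbertBasis.hasSum_norm_sq_sub_smul_rankOne (e : HilbertBasis ι ℝ H) {S : H →L[ℝ] G}
    (hS : Summable fun i => ‖S (e i)‖ ^ 2) (g : G) (v : H) (t : ℝ) :
    HasSum (fun i => ‖(S - t • rankOne ℝ g v) (e i)‖ ^ 2)
      ((∑' i, ‖S (e i)‖ ^ 2) - 2 * t * inner ℝ v (adjoint S g) + ‖g‖ ^ 2 * t ^ 2 * ‖v‖ ^ 2) := by
  have hsum := (hS.hasSum.sub ((e.hasSum_inner_mul_inner v (adjoint S g)).mul_left (2 * t))).add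
    ((e.hasSum_inner_sq_s9 v).mul_left (‖g‖ ^ 2 * t ^ 2))
  refine hsum.congr_fun fun i => ?_
  rw [sub_apply, smul_apply, rankOne_apply, smul_smul, sub_eq_add_neg, ← neg_smul,
    norm_add_smul_sq_real, ← adjoint_inner_right]
  ring

lemma adjoint_apply_add_adjoint_apply_eq_zero_of_forall_le {E : Type*} [NormedAddCommGroup E]
    [InnerProductSpace ℝ E] [CompleteSpace E] {T : H →L[ℝ] E} {M : H →L[ℝ] G} {c : G} {x₀ : H}
    (h : ∀ x, ‖T x₀‖ ^ 2 + ‖M x₀ - c‖ ^ 2 ≤ ‖T x‖ ^ 2 + ‖M x - c‖ ^ 2) :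
    adjoint T (T x₀) + adjoint M (M x₀ - c) = 0 := by
  refine ext_inner_right ℝ fun y => ?_
  rw [inner_add_left, adjoint_inner_left, adjoint_inner_left, inner_zero_left]
  have hlin := eq_zero_of_forall_nonneg_mul_add_mul_sq
    (c := 2 * (inner ℝ (T x₀) (T y) + inner ℝ (M x₀ - c) (M y)))
    (a := ‖T y‖ ^ 2 + ‖M y‖ ^ 2) fun t => by
      have hxt := h (x₀ + t • y)
      rw [map_add, map_smul, norm_add_smul_sq_real, map_add, map_smul, add_sub_right_comm,
        norm_add_smul_sq_real] at hxt
      linear_combination hxt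
  linarith

lemma adjoint_comp_comp_sub_eq_rankOne_of_forall_le (e : HilbertBasis ι ℝ H) {R : G →L[ℝ] K}
    {A A₀ : H →L[ℝ] G} {b : G} {x₀ : H} (hS : Summable fun i => ‖(R ∘L (A - A₀)) (e i)‖ ^ 2)
    (h : ∀ X : H →L[ℝ] G, (∑' i, ‖(R ∘L (A - A₀)) (e i)‖ ^ 2) + ‖R (A₀ x₀ - b)‖ ^ 2 ≤
      (∑' i, ‖(R ∘L (A - X)) (e i)‖ ^ 2) + ‖R (X x₀ - b)‖ ^ 2) :
    (adjoint R ∘L R) ∘L (A - A₀) = rankOne ℝ ((adjoint R ∘L R) (A₀ x₀ - b)) x₀ := by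
  have hadj : ∀ u, adjoint (R ∘L (A - A₀)) (R u) = inner ℝ (R (A₀ x₀ - b)) (R u) • x₀ := by
    intro u
    refine ext_inner_left ℝ fun v => ?_
    rw [real_inner_smul_right]
    have hlin := eq_zero_of_forall_nonneg_mul_add_mul_sq
      (c := 2 * (inner ℝ (R (A₀ x₀ - b)) (R u) * inner ℝ v x₀
        - inner ℝ v (adjoint (R ∘L (A - A₀)) (R u))))
      (a := ‖R u‖ ^ 2 * ‖v‖ ^ 2 + ‖R u‖ ^ 2 * inner ℝ v x₀ ^ 2) fun t => by
        have hXt := h (A₀ + t • rankOne ℝ u v)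
        have hcomp : R ∘L (A - (A₀ + t • rankOne ℝ u v))
            = R ∘L (A - A₀) - t • rankOne ℝ (R u) v := by
          rw [sub_add_eq_sub_sub, comp_sub, comp_smul, comp_rankOne]
        have hres : R ((A₀ + t • rankOne ℝ u v) x₀ - b)
            = R (A₀ x₀ - b) + (inner ℝ v x₀ * t) • R u := by
          rw [add_apply, smul_apply, rankOne_apply, smul_smul, add_sub_right_comm, map_add,
            map_smul, mul_comm]
        rw [hcomp, (e.hasSum_norm_sq_sub_smul_rankOne hS _ _ _).tsum_eq, hres,
          norm_add_smul_sq_real] at hXt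
        linear_combination hXt
    linarith
  ext y
  refine ext_inner_right ℝ fun u => ?_
  rw [comp_apply, comp_apply, adjoint_inner_left, ← comp_apply R, ← adjoint_inner_right, hadj,
    rankOne_apply, real_inner_smul_left, real_inner_smul_right, comp_apply, adjoint_inner_left,
    real_inner_comm y]
  ring

end

lemma apply_sub_eq_smul_of_comp_sub_eq_rankOne {H G : Type*} [NormedAddCommGroup H]
    [InnerProductSpace ℝ H] [NormedAddCommGroup G] [InnerProductSpace ℝ G] {W : G →L[ℝ] G}
    {A A₀ : H →L[ℝ] G} {b : G} {x₀ : H} (h : W ∘L (A - A₀) = rankOne ℝ (W (A₀ x₀ - b)) x₀) :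
    W (A x₀ - b) = (1 + ‖x₀‖ ^ 2) • W (A₀ x₀ - b) := by
  have hx₀ := congr($h x₀)
  rw [comp_apply, sub_apply, rankOne_apply, real_inner_self_eq_norm_sq,
    ← sub_sub_sub_cancel_right _ _ b, map_sub, sub_eq_iff_eq_add] at hx₀
  rw [hx₀, add_smul, one_smul, add_comm]

/-- Hilbert spaces `H, F, E`, `A ∈ L(H,F)`, `T ∈ L(H,E)`, `b ∈ F`, `W ∈ L(F)`
positive with square root `R = W^{1/2}` Hilbert–Schmidt.  If `(A₀, x₀)` minimizes the
regularized weighted total least squares objective, then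
`(1+‖x₀‖²)T*Tx₀ + A*W(Ax₀ − b) = (‖Ax₀−b‖²_W/(1+‖x₀‖²))x₀`
and `WA₀ = WA − ⟨·, x₀⟩W(Ax₀−b)/(1+‖x₀‖²)`. -/
theorem stmt9_necessary_conditions
    {H F E ι ι' : Type*} [NormedAddCommGroup H] [InnerProductSpace ℝ H] [CompleteSpace H]
    [NormedAddCommGroup F] [InnerProductSpace ℝ F] [CompleteSpace F]
    [NormedAddCommGroup E] [InnerProductSpace ℝ E] [CompleteSpace E]
    (A A₀ : H →L[ℝ] F) (T : H →L[ℝ] E) (b : F) (x₀ : H) (W R : F →L[ℝ] F)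
    (hR : R.IsPositive) (hRW : R.comp R = W)
    (f : HilbertBasis ι' ℝ F) (hHS : Summable fun i => ‖R (f i)‖ ^ 2)
    (e : HilbertBasis ι ℝ H)
    (hmin : ∀ (X : H →L[ℝ] F) (x : H),
        ‖T x₀‖ ^ 2 + (∑' i, ‖(R.comp (A - A₀)) (e i)‖ ^ 2) + ‖R (A₀ x₀ - b)‖ ^ 2 ≤
          ‖T x‖ ^ 2 + (∑' i, ‖(R.comp (A - X)) (e i)‖ ^ 2) + ‖R (X x - b)‖ ^ 2) :
    (1 + ‖x₀‖ ^ 2) • ((adjoint T) (T x₀)) + (adjoint A) (W (A x₀ - b)) =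
        (‖R (A x₀ - b)‖ ^ 2 / (1 + ‖x₀‖ ^ 2)) • x₀ ∧
    W.comp A₀ = W.comp A -
        (1 / (1 + ‖x₀‖ ^ 2)) • (innerSL ℝ x₀).smulRight (W (A x₀ - b)) := by
  have hRsa : IsSelfAdjoint R := hR.isSelfAdjoint
  have hW : adjoint R ∘L R = W := by rw [hRsa.adjoint_eq, hRW]
  have hWsa : IsSelfAdjoint W := hW ▸ IsSelfAdjoint.star_mul_self R
  have hnormal : adjoint T (T x₀) + adjoint A₀ (W (A₀ x₀ - b)) = 0 := by
    have h := adjoint_apply_add_adjoint_apply_eq_zero_of_forall_le (M := R ∘L A₀) (c := R b)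
      fun x => by have := hmin A₀ x; simp only [comp_apply, map_sub] at this ⊢; linarith
    rwa [comp_apply, ← map_sub, adjoint_comp, comp_apply, ← comp_apply (adjoint R), hW] at h
  have hrankOne : W ∘L (A - A₀) = rankOne ℝ (W (A₀ x₀ - b)) x₀ := by
    rw [← hW]
    exact adjoint_comp_comp_sub_eq_rankOne_of_forall_le e
      (e.summable_norm_sq_comp_apply_s9 f (by rwa [hRsa.adjoint_eq]) _)
      fun X => by linarith [hmin X x₀]
  have hres := apply_sub_eq_smul_of_comp_sub_eq_rankOne hrankOne
  have hres₀ : W (A₀ x₀ - b) = (1 + ‖x₀‖ ^ 2)⁻¹ • W (A x₀ - b) := by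
    rw [hres, smul_smul, inv_mul_cancel₀ (by positivity), one_smul]
  constructor
  · calc (1 + ‖x₀‖ ^ 2) • adjoint T (T x₀) + adjoint A (W (A x₀ - b))
          = adjoint (A - A₀) (W (A x₀ - b)) := by
            rw [eq_neg_of_add_eq_zero_left hnormal, smul_neg, ← map_smul, ← hres,
              map_sub adjoint, sub_apply]
            abel
      _ = adjoint (W ∘L (A - A₀)) (A x₀ - b) := by
            rw [adjoint_comp, hWsa.adjoint_eq, comp_apply]
      _ = inner ℝ (W (A₀ x₀ - b)) (A x₀ - b) • x₀ := by
            rw [hrankOne, adjoint_rankOne, rankOne_apply]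
      _ = (‖R (A x₀ - b)‖ ^ 2 / (1 + ‖x₀‖ ^ 2)) • x₀ := by
            rw [hres₀, real_inner_smul_left, ← hW, comp_apply, adjoint_inner_left,
              real_inner_self_eq_norm_sq, div_eq_inv_mul]
  · rw [eq_sub_iff_add_eq, ← eq_sub_iff_add_eq', ← comp_sub, hrankOne, hres₀, map_smul,
      smul_apply, one_div]
    rfl
end

section
/- Let H, F, E be Hilbert spaces, A ∈ L(H,F), T ∈ L(H,E), b ∈ F, W ∈ L(F)⁺ with W^{1/2} ∈ S₂, and fix x ∈ H. Then A_x := A + (⟨·,x⟩/(1+‖x‖²))(b − Ax) minimizes F_x(X) := ‖Tx‖² + ‖A−X‖²_{2,W} + ‖Xx−b‖²_W over X ∈ L(H,F), and the minimum value equals G(x) := ‖Ax−b‖²_W/(1+‖x‖²) + ‖Tx‖². -/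
/-!
Put `c = 1 / (1 + ‖x‖²)`, `u = c • R (A x - b)` and `D = X - A_x`. Then
`R ∘ (A - X) = ⟨·, x⟩ u - R ∘ D` and `R (X x - b) = R (D x) + u`. Expanding `x` in the Hilbert
basis turns the Hilbert–Schmidt cross term into `-2 ⟪u, R (D x)⟫`, which cancels the cross term of
`‖R (D x) + u‖²`, leaving
`‖A - X‖²_{2,W} + ‖X x - b‖²_W = (1 + ‖x‖²) ‖u‖² + ‖D‖²_{2,W} + ‖D x‖²_W`,
and `(1 + ‖x‖²) ‖u‖² = ‖A x - b‖²_W / (1 + ‖x‖²)`. All series converge because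
`∑ᵢ ‖R D eᵢ‖² = ∑ⱼ ‖D* R fⱼ‖² ≤ ‖D‖² ∑ⱼ ‖R fⱼ‖²`.
-/

open ContinuousLinearMap

open scoped RealInnerProductSpace InnerProduct

section

variable {ι κ H F G : Type*} [NormedAddCommGroup H] [InnerProductSpace ℝ H]
  [NormedAddCommGroup F] [InnerProductSpace ℝ F] [NormedAddCommGroup G] [InnerProductSpace ℝ G]

theorem HilbertBasis.hasSum_inner_sq_s10 (e : HilbertBasis ι ℝ H) (v : H) :
    HasSum (fun i => ⟪e i, v⟫ ^ 2) (‖v‖ ^ 2) := by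
  have h := e.hasSum_inner_mul_inner v v
  rwa [real_inner_self_eq_norm_sq, ← funext fun i => (sq ⟪e i, v⟫).trans
    (congrArg (· * _) (real_inner_comm _ _))] at h

theorem HilbertBasis.summable_norm_sq_of_summable_adjoint [CompleteSpace H] [CompleteSpace F]
    (e : HilbertBasis ι ℝ H) (f : HilbertBasis κ ℝ F) (C : H →L[ℝ] F)
    (hC : Summable fun j => ‖(C†) (f j)‖ ^ 2) :
    Summable fun i => ‖C (e i)‖ ^ 2 := by
  have hsq : ∀ j i, ⟪e i, (C†) (f j)⟫ ^ 2 = ⟪f j, C (e i)⟫ ^ 2 := fun j i => by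
    rw [adjoint_inner_right, real_inner_comm]
  have hprod : Summable fun p : κ × ι => ⟪f p.1, C (e p.2)⟫ ^ 2 := by
    refine (summable_prod_of_nonneg fun _ => sq_nonneg _).2 ⟨fun j => ?_, ?_⟩
    · simpa only [hsq] using (e.hasSum_inner_sq_s10 ((C†) (f j))).summable
    · simpa only [← hsq, (e.hasSum_inner_sq_s10 _).tsum_eq] using hC
  simpa only [Prod.swap_prod_mk, (f.hasSum_inner_sq_s10 _).tsum_eq] using
    ((summable_prod_of_nonneg fun _ => sq_nonneg _).1 hprod.prod_symm).2

theorem HilbertBasis.summable_norm_sq_comp [CompleteSpace H] [CompleteSpace F]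
    (e : HilbertBasis ι ℝ H) (f : HilbertBasis κ ℝ F) {R : F →L[ℝ] F} (hR : IsSelfAdjoint R)
    (hHS : Summable fun j => ‖R (f j)‖ ^ 2) (D : H →L[ℝ] F) :
    Summable fun i => ‖R (D (e i))‖ ^ 2 := by
  refine e.summable_norm_sq_of_summable_adjoint f (R ∘L D) ?_
  rw [adjoint_comp, hR.adjoint_eq]
  refine (hHS.mul_left (‖D†‖ ^ 2)).of_nonneg_of_le (fun _ => sq_nonneg _) fun j => ?_
  rw [← mul_pow]
  exact pow_le_pow_left₀ (norm_nonneg _) ((D†).le_opNorm _) 2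

theorem HilbertBasis.hasSum_norm_sq_smulRight_sub (e : HilbertBasis ι ℝ H) (x : H) (u : G)
    (C : H →L[ℝ] G) {s : ℝ} (hC : HasSum (fun i => ‖C (e i)‖ ^ 2) s) :
    HasSum (fun i => ‖((innerSL ℝ x).smulRight u - C) (e i)‖ ^ 2)
      (‖x‖ ^ 2 * ‖u‖ ^ 2 - 2 * ⟪u, C x⟫ + s) := by
  have hcross : HasSum (fun i => ⟪e i, x⟫ * ⟪u, C (e i)⟫) ⟪u, C x⟫ := by
    simpa only [comp_apply, innerSL_apply_apply, map_smul, inner_smul_right, e.repr_apply_apply,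
      smul_eq_mul] using (e.hasSum_repr x).mapL (innerSL ℝ u ∘L C)
  have hexp : ∀ i, ‖((innerSL ℝ x).smulRight u - C) (e i)‖ ^ 2
      = ⟪e i, x⟫ ^ 2 * ‖u‖ ^ 2 - 2 * (⟪e i, x⟫ * ⟪u, C (e i)⟫) + ‖C (e i)‖ ^ 2 := fun i => by
    rw [sub_apply, smulRight_apply, innerSL_apply_apply, norm_sub_sq_real, real_inner_smul_left,
      norm_smul, real_inner_comm x, Real.norm_eq_abs, mul_pow, sq_abs]
  simpa only [hexp] using (((e.hasSum_inner_sq_s10 x).mul_right _).sub (hcross.mul_left 2)).add hC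

noncomputable def partialMinimizer (A : H →L[ℝ] F) (b : F) (x : H) : H →L[ℝ] F :=
  A + (1 / (1 + ‖x‖ ^ 2)) • (innerSL ℝ x).smulRight (b - A x)

theorem partialMinimizer_apply_self_sub (A : H →L[ℝ] F) (b : F) (x : H) :
    partialMinimizer A b x x - b = (1 / (1 + ‖x‖ ^ 2)) • (A x - b) := by
  have hc : 1 / (1 + ‖x‖ ^ 2) * ‖x‖ ^ 2 = 1 - 1 / (1 + ‖x‖ ^ 2) := by
    field_simp
    ring
  simp only [partialMinimizer, add_apply, smul_apply, smulRight_apply, innerSL_apply_apply,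
    real_inner_self_eq_norm_sq, smul_smul, hc]
  module

/-- `F_x(X) - ‖T x‖²`, where `‖B‖²_{2,W} = ∑ᵢ ‖R (B eᵢ)‖²` and `‖y‖²_W = ‖R y‖²` for `W = R ∘ R`. -/
noncomputable def partialObjective (R : F →L[ℝ] F) (e : HilbertBasis ι ℝ H) (A : H →L[ℝ] F)
    (b : F) (x : H) (X : H →L[ℝ] F) : ℝ :=
  ∑' i, ‖(R ∘L (A - X)) (e i)‖ ^ 2 + ‖R (X x - b)‖ ^ 2

variable [CompleteSpace H] [CompleteSpace F] {R : F →L[ℝ] F}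

theorem partialObjective_eq (hR : IsSelfAdjoint R) (f : HilbertBasis κ ℝ F)
    (hHS : Summable fun j => ‖R (f j)‖ ^ 2) (e : HilbertBasis ι ℝ H) (A : H →L[ℝ] F) (b : F)
    (x : H) (X : H →L[ℝ] F) :
    partialObjective R e A b x X = ‖R (A x - b)‖ ^ 2 / (1 + ‖x‖ ^ 2) +
      (∑' i, ‖R ((X - partialMinimizer A b x) (e i))‖ ^ 2 +
        ‖R ((X - partialMinimizer A b x) x)‖ ^ 2) := by
  set c := 1 / (1 + ‖x‖ ^ 2) with hc
  set D := X - partialMinimizer A b x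
  set u := R (c • (A x - b))
  have hAX : R ∘L (A - X) = (innerSL ℝ x).smulRight u - R ∘L D := by
    ext h
    simp only [D, u, partialMinimizer, comp_apply, sub_apply, add_apply, smul_apply,
      smulRight_apply, innerSL_apply_apply, ← map_smul, ← map_sub]
    congr 1
    module
  have hXx : R (X x - b) = R (D x) + u := by
    rw [← map_add, sub_apply, add_comm, ← partialMinimizer_apply_self_sub]
    abel_nf
  have hsum :=
    e.hasSum_norm_sq_smulRight_sub x u (R ∘L D) (e.summable_norm_sq_comp f hR hHS D).hasSum
  have hu : ‖u‖ = c * ‖R (A x - b)‖ := by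
    rw [show u = c • R (A x - b) from map_smul .., norm_smul, Real.norm_of_nonneg (by positivity)]
  rw [partialObjective, hAX, hsum.tsum_eq, hXx, norm_add_sq_real, hu, hc]
  simp only [comp_apply, real_inner_comm u]
  field_simp
  ring

theorem partialObjective_partialMinimizer (hR : IsSelfAdjoint R) (f : HilbertBasis κ ℝ F)
    (hHS : Summable fun j => ‖R (f j)‖ ^ 2) (e : HilbertBasis ι ℝ H) (A : H →L[ℝ] F) (b : F)
    (x : H) :
    partialObjective R e A b x (partialMinimizer A b x) = ‖R (A x - b)‖ ^ 2 / (1 + ‖x‖ ^ 2) := by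
  simpa using partialObjective_eq hR f hHS e A b x (partialMinimizer A b x)

theorem partialObjective_partialMinimizer_le (hR : IsSelfAdjoint R) (f : HilbertBasis κ ℝ F)
    (hHS : Summable fun j => ‖R (f j)‖ ^ 2) (e : HilbertBasis ι ℝ H) (A : H →L[ℝ] F) (b : F)
    (x : H) (X : H →L[ℝ] F) :
    partialObjective R e A b x (partialMinimizer A b x) ≤ partialObjective R e A b x X := by
  rw [partialObjective_partialMinimizer hR f hHS, partialObjective_eq hR f hHS]
  exact le_add_of_nonneg_right (add_nonneg (tsum_nonneg fun _ => sq_nonneg _) (sq_nonneg _))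

end

theorem stmt10_partial_minimization_general
    {H F E ι ι' : Type*} [NormedAddCommGroup H] [InnerProductSpace ℝ H] [CompleteSpace H]
    [NormedAddCommGroup F] [InnerProductSpace ℝ F] [CompleteSpace F]
    [NormedAddCommGroup E] [InnerProductSpace ℝ E]
    (A : H →L[ℝ] F) (T : H →L[ℝ] E) (b : F) (x : H) (R : F →L[ℝ] F)
    (hR : R.IsPositive)
    (f : HilbertBasis ι' ℝ F) (hHS : Summable fun i => ‖R (f i)‖ ^ 2)
    (e : HilbertBasis ι ℝ H) :
    (∀ X : H →L[ℝ] F,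
        ‖T x‖ ^ 2 +
          (∑' i, ‖(R.comp (A - (A + (1 / (1 + ‖x‖ ^ 2)) •
            (innerSL ℝ x).smulRight (b - A x)))) (e i)‖ ^ 2) +
          ‖R ((A + (1 / (1 + ‖x‖ ^ 2)) • (innerSL ℝ x).smulRight (b - A x)) x - b)‖ ^ 2 ≤
        ‖T x‖ ^ 2 + (∑' i, ‖(R.comp (A - X)) (e i)‖ ^ 2) + ‖R (X x - b)‖ ^ 2) ∧
    ‖T x‖ ^ 2 +
        (∑' i, ‖(R.comp (A - (A + (1 / (1 + ‖x‖ ^ 2)) •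
          (innerSL ℝ x).smulRight (b - A x)))) (e i)‖ ^ 2) +
        ‖R ((A + (1 / (1 + ‖x‖ ^ 2)) • (innerSL ℝ x).smulRight (b - A x)) x - b)‖ ^ 2 =
      ‖R (A x - b)‖ ^ 2 / (1 + ‖x‖ ^ 2) + ‖T x‖ ^ 2 := by
  have hmin := partialObjective_partialMinimizer hR.isSelfAdjoint f hHS e A b x
  have hle := partialObjective_partialMinimizer_le hR.isSelfAdjoint f hHS e A b x
  unfold partialObjective partialMinimizer at hmin hle
  exact ⟨fun X => by linarith [hle X], by linarith⟩

/-- Hilbert spaces `H, F, E`, `A ∈ L(H,F)`, `T ∈ L(H,E)`, `b ∈ F`, `W ∈ L(F)`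
positive with square root `R = W^{1/2}` Hilbert–Schmidt, and `x ∈ H` fixed.  Then
`A_x := A + (⟨·,x⟩/(1+‖x‖²))(b − Ax)` minimizes
`F_x(X) := ‖Tx‖² + ‖A−X‖²_{2,W} + ‖Xx−b‖²_W` over `X ∈ L(H,F)`, and the minimum value is
`G(x) := ‖Ax−b‖²_W/(1+‖x‖²) + ‖Tx‖²`. -/
theorem stmt10_partial_minimization
    {H F E ι ι' : Type*} [NormedAddCommGroup H] [InnerProductSpace ℝ H] [CompleteSpace H]
    [NormedAddCommGroup F] [InnerProductSpace ℝ F] [CompleteSpace F]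
    [NormedAddCommGroup E] [InnerProductSpace ℝ E] [CompleteSpace E]
    (A : H →L[ℝ] F) (T : H →L[ℝ] E) (b : F) (x : H) (W R : F →L[ℝ] F)
    (hR : R.IsPositive) (hRW : R.comp R = W)
    (f : HilbertBasis ι' ℝ F) (hHS : Summable fun i => ‖R (f i)‖ ^ 2)
    (e : HilbertBasis ι ℝ H) :
    (∀ X : H →L[ℝ] F,
        ‖T x‖ ^ 2 +
          (∑' i, ‖(R.comp (A - (A + (1 / (1 + ‖x‖ ^ 2)) •
            (innerSL ℝ x).smulRight (b - A x)))) (e i)‖ ^ 2) +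
          ‖R ((A + (1 / (1 + ‖x‖ ^ 2)) • (innerSL ℝ x).smulRight (b - A x)) x - b)‖ ^ 2 ≤
        ‖T x‖ ^ 2 + (∑' i, ‖(R.comp (A - X)) (e i)‖ ^ 2) + ‖R (X x - b)‖ ^ 2) ∧
    ‖T x‖ ^ 2 +
        (∑' i, ‖(R.comp (A - (A + (1 / (1 + ‖x‖ ^ 2)) •
          (innerSL ℝ x).smulRight (b - A x)))) (e i)‖ ^ 2) +
        ‖R ((A + (1 / (1 + ‖x‖ ^ 2)) • (innerSL ℝ x).smulRight (b - A x)) x - b)‖ ^ 2 =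
      ‖R (A x - b)‖ ^ 2 / (1 + ‖x‖ ^ 2) + ‖T x‖ ^ 2 :=
  stmt10_partial_minimization_general A T b x R hR f hHS e
end
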